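/- arXiv:1302.5672 — 2 statements merged into one kernel-verified Lean document; each statement's English description precedes it below -/
import Mathlib

section
/- Let τ be an irrational real number and let h : ℝ → ℝ be a continuous map satisfying h(x+1) = h(x)+1 for all x and h(x+τ) = h(x)+τ for all x (i.e., h commutes with the translations r₁ and r_τ). Then h is itself a translation: h(x) = x + h(0) for all x ∈ ℝ. -/
/-- If `τ` is irrational and a continuous `h : ℝ → ℝ` commutes with the translations
by `1` and by `τ`, then `h` is itself a translation: `h x = x + h 0` for all `x`. -/
theorem stmt_6 (τ : ℝ) (hτ : Irrational τ) (h : ℝ → ℝ) (hc : Continuous h)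
    (h1 : ∀ x : ℝ, h (x + 1) = h x + 1) (h2 : ∀ x : ℝ, h (x + τ) = h x + τ) :
    ∀ x : ℝ, h x = x + h 0 := by
  set g : ℝ → ℝ := fun x => h x - x with hg
  have hgc : Continuous g := hc.sub continuous_id
  -- periods of g form an additive subgroup
  let P : AddSubgroup ℝ :=
  { carrier := {t | ∀ x, g (x + t) = g x}
    zero_mem' := by intro x; simp
    add_mem' := by
      intro a b ha hb x
      rw [← add_assoc, hb, ha]
    neg_mem' := by
      intro a ha x
      have := ha (x + -a)
      simpa using this.symm }
  have h1P : (1 : ℝ) ∈ P := by intro x; simp [hg, h1 x]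
  have hτP : τ ∈ P := by intro x; simp [hg, h2 x]
  have hdense : Dense (P : Set ℝ) := by
    rcases P.dense_or_cyclic with hd | ⟨a, ha⟩
    · exact hd
    · exfalso
      have h1' : (1 : ℝ) ∈ AddSubgroup.closure {a} := ha ▸ h1P
      have hτ' : τ ∈ AddSubgroup.closure {a} := ha ▸ hτP
      rw [AddSubgroup.mem_closure_singleton] at h1' hτ'
      obtain ⟨n, hn⟩ := h1'
      obtain ⟨m, hm⟩ := hτ'
      rw [zsmul_eq_mul] at hn hm
      have hn0 : (n : ℝ) ≠ 0 := by
        intro h0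
        rw [h0, zero_mul] at hn
        exact one_ne_zero hn.symm
      have : τ = (m : ℝ) / (n : ℝ) := by
        field_simp
        rw [← hm, show (m:ℝ)*a*(n:ℝ) = (m:ℝ)*((n:ℝ)*a) by ring, hn, mul_one]
      exact hτ ⟨(m : ℚ) / n, by push_cast [this]; ring⟩
  -- g is constant
  intro x
  have key : g x = g 0 := by
    obtain ⟨s, hs, hlim⟩ := mem_closure_iff_seq_limit.1 (hdense x)
    have hgs : ∀ n, g (s n) = g 0 := fun n => by
      have := hs n 0
      simpa using this
    have l1 : Filter.Tendsto (g ∘ s) Filter.atTop (nhds (g x)) :=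
      (hgc.continuousAt).tendsto.comp hlim
    have l2 : Filter.Tendsto (g ∘ s) Filter.atTop (nhds (g 0)) := by
      have : (g ∘ s) = fun _ => g 0 := funext hgs
      rw [this]
      exact tendsto_const_nhds
    exact tendsto_nhds_unique l1 l2
  have : h x - x = h 0 - 0 := key
  linarith
end

section
/- Let α₁, …, α_n be real numbers, at least one of which is irrational. Then there exist infinitely many (n+1)-tuples of integers (q, p₁, …, p_n) with q ≥ 1 and gcd(q, p₁, …, p_n) = 1 such that |α_i − p_i/q| < 1/q^{1+1/n} for all i = 1, …, n. -/
open Finset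

lemma dirichlet_box (n N : ℕ) (hN : 1 ≤ N) (α : Fin n → ℝ) :
    ∃ q : ℤ, ∃ p : Fin n → ℤ, 1 ≤ q ∧ q ≤ (N : ℤ) ^ n ∧
      ∀ i, |q * α i - p i| < 1 / N := by
  have hN0 : (0:ℝ) < N := by exact_mod_cast hN
  have hbox : ∀ (k : ℕ) (i : Fin n), (⌊(N : ℝ) * Int.fract ((k : ℝ) * α i)⌋).toNat < N := by
    intro k i
    have h1 : ⌊(N : ℝ) * Int.fract ((k : ℝ) * α i)⌋ < (N : ℤ) := by
      rw [Int.floor_lt]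
      push_cast
      nlinarith [Int.fract_lt_one ((k : ℝ) * α i), Int.fract_nonneg ((k : ℝ) * α i)]
    omega
  set f : Fin (N ^ n + 1) → (Fin n → Fin N) := fun k i =>
    ⟨(⌊(N : ℝ) * Int.fract ((k : ℝ) * α i)⌋).toNat, hbox k i⟩ with hf
  have hcard : Fintype.card (Fin n → Fin N) < Fintype.card (Fin (N ^ n + 1)) := by
    simp [Fintype.card_fun]
  obtain ⟨a, b, hlt, hfab⟩ : ∃ a b : Fin (N ^ n + 1), a < b ∧ f a = f b := by
    obtain ⟨a, b, hab, hfab⟩ := Fintype.exists_ne_map_eq_of_card_lt f hcard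
    rcases Ne.lt_or_gt hab with h | h
    · exact ⟨a, b, h, hfab⟩
    · exact ⟨b, a, h, hfab.symm⟩
  refine ⟨(b : ℤ) - (a : ℤ), fun i => ⌊(b : ℝ) * α i⌋ - ⌊(a : ℝ) * α i⌋, ?_, ?_, ?_⟩
  · have : (a : ℕ) < (b : ℕ) := hlt
    omega
  · have hb := b.isLt
    have hb' : (b : ℕ) ≤ N ^ n := by omega
    calc ((b : ℕ) : ℤ) - (a : ℕ) ≤ ((b : ℕ) : ℤ) := by omega
      _ ≤ (N : ℤ) ^ n := by exact_mod_cast hb'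
  · intro i
    have hfi : (⌊(N : ℝ) * Int.fract ((a : ℝ) * α i)⌋).toNat
        = (⌊(N : ℝ) * Int.fract ((b : ℝ) * α i)⌋).toNat := by
      have := congrFun hfab i
      simpa [hf] using congrArg Fin.val this
    have hnn : ∀ (k : ℕ), 0 ≤ ⌊(N : ℝ) * Int.fract ((k : ℝ) * α i)⌋ := by
      intro k
      exact Int.floor_nonneg.2 (mul_nonneg hN0.le (Int.fract_nonneg _))
    have hfl : ⌊(N : ℝ) * Int.fract ((a : ℝ) * α i)⌋
        = ⌊(N : ℝ) * Int.fract ((b : ℝ) * α i)⌋ := by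
      have := hnn a; have := hnn b; omega
    have hfl' : ((⌊(N : ℝ) * Int.fract ((a : ℝ) * α i)⌋ : ℤ) : ℝ)
        = ((⌊(N : ℝ) * Int.fract ((b : ℝ) * α i)⌋ : ℤ) : ℝ) := by exact_mod_cast hfl
    have h1 : |(N : ℝ) * Int.fract ((b : ℝ) * α i) - (N : ℝ) * Int.fract ((a : ℝ) * α i)| < 1 := by
      rw [abs_sub_lt_iff]
      constructor <;>
        linarith [Int.floor_le ((N : ℝ) * Int.fract ((a : ℝ) * α i)),
          Int.lt_floor_add_one ((N : ℝ) * Int.fract ((a : ℝ) * α i)),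
          Int.floor_le ((N : ℝ) * Int.fract ((b : ℝ) * α i)),
          Int.lt_floor_add_one ((N : ℝ) * Int.fract ((b : ℝ) * α i))]
    have h2 : |Int.fract ((b : ℝ) * α i) - Int.fract ((a : ℝ) * α i)| < 1 / N := by
      rw [lt_div_iff₀ hN0, ← abs_of_pos hN0, ← abs_mul]
      calc _ = |(N : ℝ) * Int.fract ((b : ℝ) * α i) - (N : ℝ) * Int.fract ((a : ℝ) * α i)| := by
            congr 1; ring
        _ < 1 := h1
    convert h2 using 2
    unfold Int.fract
    push_cast
    ring

lemma dirichlet_step (n : ℕ) (hn : 1 ≤ n) (α : Fin n → ℝ) (N : ℕ) (hN : 1 ≤ N) :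
    ∃ qp : ℤ × (Fin n → ℤ), (1 ≤ qp.1 ∧ Int.gcd qp.1 (Finset.univ.gcd qp.2) = 1 ∧
      ∀ i, |α i - (qp.2 i : ℝ) / (qp.1 : ℝ)| < 1 / (qp.1 : ℝ) ^ ((1 : ℝ) + 1 / (n : ℝ))) ∧
      ∀ i, |α i - (qp.2 i : ℝ) / (qp.1 : ℝ)| < 1 / N := by
  obtain ⟨q, p, hq1, hqN, hbound⟩ := dirichlet_box n N hN α
  have hq0 : (0:ℤ) < q := hq1
  have hqR : (0:ℝ) < q := by exact_mod_cast hq0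
  have hNR : (0:ℝ) < N := by exact_mod_cast hN
  set g : ℕ := Int.gcd q (Finset.univ.gcd p) with hg
  have hgq : (g : ℤ) ∣ q := Int.gcd_dvd_left _ _
  have hgp : ∀ i, (g : ℤ) ∣ p i := fun i =>
    (Int.gcd_dvd_right _ _).trans (Finset.gcd_dvd (Finset.mem_univ i))
  have hgpos : 0 < g := by
    rcases Nat.eq_zero_or_pos g with h | h
    · exfalso
      have : q = 0 := by
        have := Int.gcd_eq_zero_iff.1 h
        exact this.1
      omega
    · exact h
  have hgZ : (0:ℤ) < (g:ℤ) := by exact_mod_cast hgpos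
  set q' : ℤ := q / g with hq'
  set p' : Fin n → ℤ := fun i => p i / g with hp'
  have hqeq : q = g * q' := (Int.mul_ediv_cancel' hgq).symm
  have hpeq : ∀ i, p i = g * p' i := fun i => (Int.mul_ediv_cancel' (hgp i)).symm
  have hq'1 : 1 ≤ q' := by nlinarith
  have hq'R : (0:ℝ) < q' := by exact_mod_cast hq'1
  have hq'q : q' ≤ q := by nlinarith
  -- gcd condition
  have hgcd : Int.gcd q' (Finset.univ.gcd p') = 1 := by
    have h1 : Finset.univ.gcd p = (g : ℤ) * Finset.univ.gcd p' := by
      have : Finset.univ.gcd p = Finset.univ.gcd (fun i => (g:ℤ) * p' i) := by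
        apply Finset.gcd_congr rfl
        intro i _
        exact hpeq i
      rw [this, Finset.gcd_mul_left]
      congr 1
      exact Int.normalize_of_nonneg hgZ.le
    have h2 : g = Int.gcd ((g:ℤ) * q') ((g:ℤ) * Finset.univ.gcd p') := by
      rw [← hqeq, ← h1]
    rw [Int.gcd_mul_left] at h2
    simp only [Int.natAbs_natCast] at h2
    nlinarith [Nat.le_of_eq h2]
  -- ratio equality
  have hratio : ∀ i, (p i : ℝ) / (q : ℝ) = (p' i : ℝ) / (q' : ℝ) := by
    intro i
    rw [hpeq i, hqeq]
    push_cast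
    rw [mul_div_mul_left]
    exact_mod_cast hgZ.ne'
  -- basic bound
  have hbase : ∀ i, |α i - (p i : ℝ) / q| < 1 / ((q : ℝ) * N) := by
    intro i
    have heq : α i - (p i : ℝ) / q = ((q : ℝ) * α i - p i) / q := by field_simp
    rw [heq, abs_div, abs_of_pos hqR, div_lt_div_iff₀ hqR (by positivity)]
    have h4 : |(q : ℝ) * α i - p i| * N < 1 := by
      rw [← lt_div_iff₀ hNR]; exact hbound i
    nlinarith [abs_nonneg ((q : ℝ) * α i - p i)]
  -- exponent bound
  have hexp : (q' : ℝ) ^ ((1 : ℝ) + 1 / (n : ℝ)) ≤ (q : ℝ) * N := by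
    have hnR : (0:ℝ) < n := by exact_mod_cast hn
    have e1 : (q' : ℝ) ^ ((1 : ℝ) + 1 / (n : ℝ)) ≤ (q : ℝ) ^ ((1 : ℝ) + 1 / (n : ℝ)) := by
      apply Real.rpow_le_rpow hq'R.le (by exact_mod_cast hq'q) (by positivity)
    have e2 : (q : ℝ) ^ ((1 : ℝ) + 1 / (n : ℝ)) = q * (q : ℝ) ^ ((1 : ℝ) / (n : ℝ)) := by
      rw [Real.rpow_add hqR, Real.rpow_one, one_div]
    have e3 : (q : ℝ) ^ ((1 : ℝ) / (n : ℝ)) ≤ N := by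
      have hqle : (q : ℝ) ≤ (N : ℝ) ^ (n : ℕ) := by exact_mod_cast hqN
      calc (q : ℝ) ^ ((1 : ℝ) / (n : ℝ))
          ≤ ((N : ℝ) ^ (n : ℕ)) ^ ((1 : ℝ) / (n : ℝ)) :=
            Real.rpow_le_rpow hqR.le hqle (by positivity)
        _ = (N : ℝ) ^ ((n : ℝ) * (1 / (n : ℝ))) := by
            rw [← Real.rpow_natCast (N:ℝ) n, ← Real.rpow_mul hNR.le]
        _ = N := by
            rw [mul_one_div, div_self hnR.ne', Real.rpow_one]
    calc (q' : ℝ) ^ ((1 : ℝ) + 1 / (n : ℝ)) ≤ (q : ℝ) ^ ((1 : ℝ) + 1 / (n : ℝ)) := e1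
      _ = q * (q : ℝ) ^ ((1 : ℝ) / (n : ℝ)) := e2
      _ ≤ q * N := by nlinarith [Real.rpow_nonneg hqR.le ((1:ℝ)/(n:ℝ))]
  refine ⟨⟨q', p'⟩, ⟨hq'1, hgcd, ?_⟩, ?_⟩
  · intro i
    calc |α i - (p' i : ℝ) / q'| = |α i - (p i : ℝ) / q| := by rw [hratio i]
      _ < 1 / ((q : ℝ) * N) := hbase i
      _ ≤ 1 / (q' : ℝ) ^ ((1 : ℝ) + 1 / (n : ℝ)) := by
          apply one_div_le_one_div_of_le (by positivity) hexp
  · intro i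
    calc |α i - (p' i : ℝ) / q'| = |α i - (p i : ℝ) / q| := by rw [hratio i]
      _ < 1 / ((q : ℝ) * N) := hbase i
      _ ≤ 1 / N := by
          apply one_div_le_one_div_of_le hNR
          have h5 : (1:ℝ) ≤ q := by exact_mod_cast hq1
          nlinarith


/-- Dirichlet's theorem on simultaneous Diophantine approximation: if at least one of
`α₁, …, α_n` is irrational, then there are infinitely many tuples `(q, p₁, …, p_n)` of
integers with `q ≥ 1` and `gcd(q, p₁, …, p_n) = 1` such that
`|α_i − p_i/q| < 1/q^{1+1/n}` for all `i`. -/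
theorem stmt_9 (n : ℕ) (hn : 1 ≤ n) (α : Fin n → ℝ) (hirr : ∃ i, Irrational (α i)) :
    {qp : ℤ × (Fin n → ℤ) |
      1 ≤ qp.1 ∧ Int.gcd qp.1 (Finset.univ.gcd qp.2) = 1 ∧
      ∀ i, |α i - (qp.2 i : ℝ) / (qp.1 : ℝ)| <
        1 / (qp.1 : ℝ) ^ ((1 : ℝ) + 1 / (n : ℝ))}.Infinite := by
  set S : Set (ℤ × (Fin n → ℤ)) := {qp : ℤ × (Fin n → ℤ) |
      1 ≤ qp.1 ∧ Int.gcd qp.1 (Finset.univ.gcd qp.2) = 1 ∧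
      ∀ i, |α i - (qp.2 i : ℝ) / (qp.1 : ℝ)| <
        1 / (qp.1 : ℝ) ^ ((1 : ℝ) + 1 / (n : ℝ))} with hS
  obtain ⟨j, hj⟩ := hirr
  by_contra hfin
  rw [Set.not_infinite] at hfin
  -- distance function
  set d : ℤ × (Fin n → ℤ) → ℝ := fun qp => |α j - (qp.2 j : ℝ) / (qp.1 : ℝ)| with hd
  have hSne : S.Nonempty := by
    obtain ⟨qp, hqp, _⟩ := dirichlet_step n hn α 1 le_rfl
    exact ⟨qp, hqp⟩
  obtain ⟨qp₀, hqp₀S, hmin⟩ := Set.exists_min_image S d hfin hSne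
  have hpos : 0 < d qp₀ := by
    rw [hd]
    simp only
    rw [abs_pos, sub_ne_zero]
    intro hEq
    apply hj
    refine ⟨(qp₀.2 j : ℚ) / (qp₀.1 : ℚ), ?_⟩
    rw [hEq]
    push_cast
    ring
  obtain ⟨N, hNlt⟩ := exists_nat_one_div_lt hpos
  obtain ⟨qp, hqpS, hqpd⟩ := dirichlet_step n hn α (N + 1) (Nat.le_add_left 1 N)
  have h1 : d qp < d qp₀ := by
    calc d qp = |α j - (qp.2 j : ℝ) / (qp.1 : ℝ)| := rfl
      _ < 1 / (N + 1 : ℕ) := hqpd j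
      _ < d qp₀ := by
          have : ((N + 1 : ℕ) : ℝ) = (N : ℝ) + 1 := by push_cast; ring
          rw [this]
          exact hNlt
  exact absurd (hmin qp hqpS) (not_le.2 h1)
end
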